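/- arXiv:1701.08266 — 2 statements merged into one kernel-verified Lean document; each statement's English description precedes it below -/
import Mathlib

section
/- Fix μ > 0, a = b = 7/2, and a positive integer K. Then as T → ∞ (T ∈ ℕ), the blocking probability is asymptotically equal to its lower bound: lim_{T→∞} P_b(K,T)·(T+1)·(1−λ)² / P_K(T+1) = 1, where λ = μ/(μ + b). Equivalently, the ratio of the paper's lower bound P_K(T+1)/((T+1)(1−λ)²) to its upper bound P_K(T+1)/((T+1)(1 − (T+1)(T+K·a+1)λ/(T+2)²)²) tends to 1. -/
open scoped BigOperators

/-- The distribution of the number of users in the coverage of a cluster of `K` RRUs: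
`P_K(n) = b^{Ka} μ^n Γ(n + Ka) / ((μ + b)^{Ka+n} Γ(Ka) n!)` with `a = b = 7/2`. -/
noncomputable def Puser (μ : ℝ) (K : ℕ) (n : ℕ) : ℝ :=
  (7/2 : ℝ) ^ ((K : ℝ) * (7/2)) * μ ^ n * Real.Gamma ((n : ℝ) + (K : ℝ) * (7/2)) /
    ((μ + 7/2) ^ ((K : ℝ) * (7/2) + (n : ℝ)) * Real.Gamma ((K : ℝ) * (7/2)) *
      (n.factorial : ℝ))

/-- The `n`-th summand of the user blocking probability: `((n − T)/n)·P_K(n)` for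
`n ≥ T + 1`, and `0` otherwise. -/
noncomputable def blockTerm (μ : ℝ) (K T : ℕ) (n : ℕ) : ℝ :=
  if T + 1 ≤ n then (((n : ℝ) - (T : ℝ)) / (n : ℝ)) * Puser μ K n else 0

/-- The user blocking probability `P_b(K,T) = Σ_{n=T+1}^∞ ((n − T)/n)·P_K(n)`. -/
noncomputable def Pblock (μ : ℝ) (K T : ℕ) : ℝ := ∑' n : ℕ, blockTerm μ K T n

/-!
`P_K` is a negative binomial law with parameters `α = K·a` and `λ` (written `l` below):
`P_K(n + 1) = λ (n + α)/(n + 1) · P_K(n)`. Hence `P_K(T + 1 + m) / P_K(T + 1)` is a product of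
`m` factors `λ (T + 1 + j + α)/(T + 2 + j)`, each tending to `λ` as `T → ∞`, and
`P_b(K,T)·(T + 1) / P_K(T + 1)` is the series over `m` of `(m + 1)(T + 1)/(T + 1 + m)` times that
product. Termwise it tends to `Σ (m + 1) λ^m = (1 - λ)⁻²`. Since `α ≥ 1` the factors decrease in
`T`, so the series at `T = 0` dominates and Tannery's theorem gives the limit.
-/

open Filter Topology Finset

section NegativeBinomialTail

variable {l α : ℝ}

noncomputable def tailRatio (l α : ℝ) (T m : ℕ) : ℝ :=
  ∏ j ∈ range m, l * ((T + 1 + j + α) / (T + 2 + j))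

lemma eq_mul_tailRatio {p : ℕ → ℝ} (hp : ∀ n : ℕ, p (n + 1) = l * ((n + α) / (n + 1)) * p n)
    (T m : ℕ) : p (T + 1 + m) = p (T + 1) * tailRatio l α T m := by
  induction m with
  | zero => simp [tailRatio]
  | succ m ih =>
    rw [← add_assoc, hp, ih, tailRatio, tailRatio, prod_range_succ]
    push_cast
    ring_nf

lemma tailRatio_nonneg (hl : 0 ≤ l) (hα : 0 ≤ α) (T m : ℕ) : 0 ≤ tailRatio l α T m :=
  prod_nonneg fun j _ => by positivity

lemma tailRatio_le_tailRatio_zero (hl : 0 ≤ l) (hα : 1 ≤ α) (T m : ℕ) :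
    tailRatio l α T m ≤ tailRatio l α 0 m := by
  refine prod_le_prod (fun j _ => by positivity) fun j _ => ?_
  refine mul_le_mul_of_nonneg_left ?_ hl
  rw [div_le_div_iff₀ (by positivity) (by positivity)]
  push_cast
  nlinarith [mul_nonneg (Nat.cast_nonneg T : (0 : ℝ) ≤ T) (sub_nonneg.mpr hα)]

lemma tendsto_tailRatio (l α : ℝ) (m : ℕ) :
    Tendsto (fun T : ℕ => tailRatio l α T m) atTop (𝓝 (l ^ m)) := by
  have hfactor (j : ℕ) :
      Tendsto (fun T : ℕ => l * ((T + 1 + j + α) / (T + 2 + j))) atTop (𝓝 l) := by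
    have h := (tendsto_add_mul_div_add_mul_atTop_nhds (1 + j + α) (2 + j) 1 one_ne_zero).const_mul l
    rw [div_one, mul_one] at h
    exact h.congr fun T => by ring_nf
  simpa [tailRatio] using tendsto_finsetProd (range m) fun j _ => hfactor j

lemma summable_succ_mul_tailRatio_zero (hl0 : 0 < l) (hl1 : l < 1) (hα : 0 ≤ α) :
    Summable fun m : ℕ => (m + 1 : ℝ) * tailRatio l α 0 m := by
  have hratio (m : ℕ) : 0 < tailRatio l α 0 m := prod_pos fun j _ => by positivity
  have hpos (m : ℕ) : 0 < (m + 1 : ℝ) * tailRatio l α 0 m := mul_pos (by positivity) (hratio m)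
  refine summable_of_ratio_test_tendsto_lt_one hl1 (Eventually.of_forall fun m => (hpos m).ne') ?_
  have h := (tendsto_add_mul_div_add_mul_atTop_nhds (1 + α) 1 1 one_ne_zero).const_mul l
  rw [div_one, mul_one] at h
  refine h.congr fun m => ?_
  rw [Real.norm_of_nonneg (hpos _).le, Real.norm_of_nonneg (hpos m).le, tailRatio, tailRatio,
    prod_range_succ]
  have := hratio m
  field_simp
  push_cast
  ring_nf

noncomputable def scaledTail (l α : ℝ) (T m : ℕ) : ℝ :=
  (m + 1) * ((T + 1) / (T + 1 + m)) * tailRatio l α T m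

lemma tendsto_scaledTail (l α : ℝ) (m : ℕ) :
    Tendsto (fun T : ℕ => scaledTail l α T m) atTop (𝓝 ((m + 1) * l ^ m)) := by
  have hweight : Tendsto (fun T : ℕ => ((T : ℝ) + 1) / (T + 1 + m)) atTop (𝓝 1) := by
    have h := tendsto_add_mul_div_add_mul_atTop_nhds (1 : ℝ) (1 + m) 1 one_ne_zero
    rw [div_one] at h
    exact h.congr fun T => by ring_nf
  have h := (hweight.const_mul ((m : ℝ) + 1)).mul (tendsto_tailRatio l α m)
  rw [mul_one] at h
  exact h

lemma norm_scaledTail_le (hl : 0 ≤ l) (hα : 1 ≤ α) (T m : ℕ) :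
    ‖scaledTail l α T m‖ ≤ (m + 1) * tailRatio l α 0 m := by
  have hweight : ((T : ℝ) + 1) / (T + 1 + m) ≤ 1 :=
    div_le_one_of_le₀ (by linarith [m.cast_nonneg (α := ℝ)]) (by positivity)
  have hratio := tailRatio_nonneg hl (by linarith : (0 : ℝ) ≤ α) T m
  rw [scaledTail, Real.norm_of_nonneg (by positivity)]
  calc ((m : ℝ) + 1) * ((T + 1) / (T + 1 + m)) * tailRatio l α T m
      ≤ (m + 1) * 1 * tailRatio l α T m := by gcongr
    _ ≤ (m + 1) * tailRatio l α 0 m := by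
      rw [mul_one]
      exact mul_le_mul_of_nonneg_left (tailRatio_le_tailRatio_zero hl hα T m) (by positivity)

lemma tendsto_tsum_scaledTail (hl0 : 0 < l) (hl1 : l < 1) (hα : 1 ≤ α) :
    Tendsto (fun T : ℕ => ∑' m, scaledTail l α T m) atTop (𝓝 (1 / (1 - l) ^ 2)) := by
  have hsum : ∑' m : ℕ, ((m : ℝ) + 1) * l ^ m = 1 / (1 - l) ^ 2 := by
    have hl : ‖l‖ < 1 := by rw [Real.norm_of_nonneg hl0.le]; exact hl1
    simpa using tsum_choose_mul_geometric_of_norm_lt_one 1 hl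
  rw [← hsum]
  exact tendsto_tsum_of_dominated_convergence
    (summable_succ_mul_tailRatio_zero hl0 hl1 (by linarith)) (tendsto_scaledTail l α)
    (Eventually.of_forall (norm_scaledTail_le hl0.le hα))

lemma tsum_tail_eq {p : ℕ → ℝ} (hp : ∀ n : ℕ, p (n + 1) = l * ((n + α) / (n + 1)) * p n)
    (T : ℕ) :
    ∑' n : ℕ, (if T + 1 ≤ n then (((n : ℝ) - (T : ℝ)) / (n : ℝ)) * p n else 0) =
      p (T + 1) / (T + 1) * ∑' m, scaledTail l α T m := by
  rw [← tsum_mul_left, ← (add_left_injective (T + 1)).tsum_eq]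
  · refine tsum_congr fun m => ?_
    rw [if_pos (Nat.le_add_left _ _), add_comm m, eq_mul_tailRatio hp, scaledTail]
    push_cast
    field_simp
    ring
  · intro n hn
    have hTn : T + 1 ≤ n := by
      by_contra h
      exact hn (if_neg h)
    exact ⟨n - (T + 1), Nat.sub_add_cancel hTn⟩

theorem tendsto_tsum_tail_mul_div {p : ℕ → ℝ} (hl0 : 0 < l) (hl1 : l < 1) (hα : 1 ≤ α)
    (hp : ∀ n : ℕ, p (n + 1) = l * ((n + α) / (n + 1)) * p n) (hp0 : ∀ n, p n ≠ 0) :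
    Tendsto (fun T : ℕ =>
        (∑' n : ℕ, if T + 1 ≤ n then (((n : ℝ) - (T : ℝ)) / (n : ℝ)) * p n else 0) *
          ((T : ℝ) + 1) * (1 - l) ^ 2 / p (T + 1))
      atTop (𝓝 1) := by
  have hl : (1 - l) ^ 2 ≠ 0 := pow_ne_zero 2 (by linarith)
  have h := (tendsto_tsum_scaledTail hl0 hl1 hα).mul_const ((1 - l) ^ 2)
  rw [one_div_mul_cancel hl] at h
  refine h.congr fun T => ?_
  rw [tsum_tail_eq hp T]
  field_simp [hp0 (T + 1)]

end NegativeBinomialTail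

lemma Puser_pos {μ : ℝ} (hμ : 0 < μ) {K : ℕ} (hK : 0 < K) (n : ℕ) : 0 < Puser μ K n := by
  have hα : 0 < (K : ℝ) * (7/2) := by positivity
  have hΓn := Real.Gamma_pos_of_pos (by positivity : 0 < (n : ℝ) + K * (7/2))
  have hΓ := Real.Gamma_pos_of_pos hα
  have hb := Real.rpow_pos_of_pos (by norm_num : (0 : ℝ) < 7/2) ((K : ℝ) * (7/2))
  have hμb := Real.rpow_pos_of_pos (by linarith : 0 < μ + 7/2) ((K : ℝ) * (7/2) + n)
  unfold Puser
  positivity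

lemma Puser_succ {μ : ℝ} (hμ : 0 ≤ μ) {K : ℕ} (hK : 0 < K) (n : ℕ) :
    Puser μ K (n + 1) = μ / (μ + 7/2) * ((n + K * (7/2)) / (n + 1)) * Puser μ K n := by
  have hα : (n : ℝ) + K * (7/2) ≠ 0 := by positivity
  have hμb : μ + 7/2 ≠ 0 := by positivity
  unfold Puser
  push_cast [Nat.factorial_succ]
  rw [add_right_comm, Real.Gamma_add_one hα, ← add_assoc, Real.rpow_add_one hμb, pow_succ]
  field_simp

/-- as `T → ∞`, the blocking probability is asymptotically equal to its
lower bound: `P_b(K,T)·(T+1)·(1−λ)² / P_K(T+1) → 1` with `λ = μ/(μ+b)`. -/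
theorem Pblock_asymptotic_lower_bound (μ : ℝ) (hμ : 0 < μ) (K : ℕ) (hK : 0 < K) :
    Filter.Tendsto
      (fun T : ℕ =>
        Pblock μ K T * ((T : ℝ) + 1) * (1 - μ / (μ + 7/2)) ^ 2 / Puser μ K (T + 1))
      Filter.atTop (nhds 1) := by
  have hμb : 0 < μ + 7/2 := by linarith
  have hα : (1 : ℝ) ≤ K * (7/2) := by
    have : (1 : ℝ) ≤ K := by exact_mod_cast hK
    linarith
  exact tendsto_tsum_tail_mul_div (div_pos hμ hμb) ((div_lt_one hμb).mpr (by linarith)) hα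
    (Puser_succ hμ.le hK) fun n => (Puser_pos hμ hK n).ne'
end

section
/- (Minimum required equivalent fronthaul capacity, eq. (18)) Fix μ > 0, a = b = 7/2, and a threshold p with 0 < p < 1. For each positive integer K define T_K(p) = min{ T ∈ ℕ : P_b(K, T) ≤ p } (this minimum exists since P_b(K,·) is decreasing with limit 0). Then lim_{K→∞} T_K(p)/K = (1 − p)·μ, where the limit is over positive integers K tending to infinity. -/
open scoped BigOperators

/-- The minimum fronthaul capacity of a cluster of `K` RRUs meeting the
blocking-probability requirement `p`: `T_K(p) = min {T : P_b(K,T) ≤ p}`. -/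
noncomputable def minCapacity (μ : ℝ) (K : ℕ) (p : ℝ) : ℕ :=
  sInf {T : ℕ | Pblock μ K T ≤ p}

/-!
`P_K` is the negative binomial law with shape `r = 7K/2` and parameter `q = μ / (μ + 7/2)`,
so the number of users `n` has mean `Kμ` and variance `Kμ(μ + 7/2)/(7/2)`, and `n / K`
concentrates at `μ` by Chebyshev's inequality. For `T = ⌈sK⌉` the blocking probability, the mean
of `(1 - T/n)⁺`, therefore tends to `1 - s/μ`. As `P_b(K, ·)` is decreasing, `T_K(p) / K` ends up
above every `s < (1 - p)μ` and below every `s > (1 - p)μ`.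
-/

open Filter Topology

noncomputable def negBinomialCoeff (r : ℝ) (n : ℕ) : ℝ :=
  Real.Gamma (n + r) / (Real.Gamma r * n.factorial)

noncomputable def negBinomial (r q : ℝ) (n : ℕ) : ℝ :=
  (1 - q) ^ r * negBinomialCoeff r n * q ^ n

theorem Real.Gamma_nat_add_eq_mul_ascPochhammer {r : ℝ} (hr : 0 < r) (n : ℕ) :
    Real.Gamma (n + r) = Real.Gamma r * (ascPochhammer ℝ n).eval r := by
  induction n with
  | zero => simp
  | succ n ih =>
    rw [ascPochhammer_succ_eval, Nat.cast_succ, add_right_comm,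
      Real.Gamma_add_one (by positivity), ih]
    ring

theorem negBinomialCoeff_eq_choose {r : ℝ} (hr : 0 < r) (n : ℕ) :
    negBinomialCoeff r n = Ring.choose (r + n - 1) n := by
  have hfact := Ring.factorial_nsmul_multichoose_eq_ascPochhammer r n
  rw [Polynomial.ascPochhammer_smeval_eq_eval, nsmul_eq_mul] at hfact
  rw [negBinomialCoeff, Real.Gamma_nat_add_eq_mul_ascPochhammer hr, ← Ring.multichoose_eq,
    ← hfact]
  have : Real.Gamma r ≠ 0 := (Real.Gamma_pos_of_pos hr).ne'
  field_simp

theorem hasSum_negBinomialCoeff_mul_pow {r q : ℝ} (hr : 0 < r) (hq : |q| < 1) :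
    HasSum (fun n => negBinomialCoeff r n * q ^ n) (1 / (1 - q) ^ r) := by
  have hq' : q ∈ Metric.eball (0 : ℝ) 1 := by
    simpa [enorm_eq_nnnorm, ← NNReal.coe_lt_one] using hq
  simpa [FormalMultilinearSeries.ofScalars_apply_eq, negBinomialCoeff_eq_choose hr, mul_comm] using
    (Real.one_div_one_sub_rpow_hasFPowerSeriesOnBall_zero r).hasSum hq'

theorem hasSum_negBinomial {r q : ℝ} (hr : 0 < r) (hq : |q| < 1) :
    HasSum (negBinomial r q) 1 := by
  have h1q : 0 < 1 - q := by linarith [le_abs_self q]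
  have h := (hasSum_negBinomialCoeff_mul_pow hr hq).mul_left ((1 - q) ^ r)
  rw [mul_one_div_cancel (Real.rpow_pos_of_pos h1q r).ne'] at h
  exact h.congr_fun fun n => mul_assoc _ _ _

theorem negBinomial_nonneg {r q : ℝ} (hr : 0 < r) (hq₀ : 0 ≤ q) (hq₁ : q ≤ 1) (n : ℕ) :
    0 ≤ negBinomial r q n := by
  have := sub_nonneg.2 hq₁
  have := Real.Gamma_pos_of_pos hr
  have := Real.Gamma_pos_of_pos (by positivity : (0 : ℝ) < n + r)
  unfold negBinomial negBinomialCoeff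
  positivity

theorem succ_mul_negBinomialCoeff_succ {r : ℝ} (hr : 0 < r) (n : ℕ) :
    (n + 1) * negBinomialCoeff r (n + 1) = r * negBinomialCoeff (r + 1) n := by
  have hΓ : Real.Gamma r ≠ 0 := (Real.Gamma_pos_of_pos hr).ne'
  simp only [negBinomialCoeff, Nat.factorial_succ, Nat.cast_mul, Nat.cast_succ,
    Real.Gamma_add_one hr.ne', add_assoc, add_comm (1 : ℝ) r]
  field_simp

theorem succ_mul_negBinomial_succ {r q : ℝ} (hr : 0 < r) (hq : q < 1) (n : ℕ) :
    (n + 1) * negBinomial r q (n + 1) = r * q / (1 - q) * negBinomial (r + 1) q n := by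
  have h1q : 0 < 1 - q := by linarith
  have h := succ_mul_negBinomialCoeff_succ hr n
  simp only [negBinomial, Real.rpow_add_one h1q.ne', pow_succ]
  rw [div_mul_eq_mul_div, eq_div_iff h1q.ne']
  linear_combination ((1 - q) ^ r * q ^ n * q * (1 - q)) * h

theorem hasSum_mul_negBinomial {r q : ℝ} (hr : 0 < r) (hq : |q| < 1) :
    HasSum (fun n => n * negBinomial r q n) (r * q / (1 - q)) := by
  rw [← hasSum_nat_add_iff' 1]
  simpa [succ_mul_negBinomial_succ hr (abs_lt.1 hq).2] using
    (hasSum_negBinomial (by linarith : 0 < r + 1) hq).mul_left (r * q / (1 - q))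

theorem hasSum_descFactorial_mul_negBinomial {r q : ℝ} (hr : 0 < r) (hq : |q| < 1) :
    HasSum (fun n => n * (n - 1) * negBinomial r q n) (r * (r + 1) * q ^ 2 / (1 - q) ^ 2) := by
  have h1q : 1 - q ≠ 0 := by linarith [(abs_lt.1 hq).2]
  have h := (hasSum_mul_negBinomial (by linarith : 0 < r + 1) hq).mul_left (r * q / (1 - q))
  rw [← hasSum_nat_add_iff' 1, Finset.sum_range_one, Nat.cast_zero, zero_mul, zero_mul, sub_zero,
    show r * (r + 1) * q ^ 2 / (1 - q) ^ 2 = r * q / (1 - q) * ((r + 1) * q / (1 - q)) by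
      field_simp]
  refine h.congr_fun fun n => ?_
  push_cast
  rw [add_sub_cancel_right, mul_right_comm, succ_mul_negBinomial_succ hr (abs_lt.1 hq).2]
  ring

theorem hasSum_sq_sub_mean_mul_negBinomial {r q : ℝ} (hr : 0 < r) (hq : |q| < 1) :
    HasSum (fun n => (n - r * q / (1 - q)) ^ 2 * negBinomial r q n) (r * q / (1 - q) ^ 2) := by
  have h1q : 1 - q ≠ 0 := by linarith [(abs_lt.1 hq).2]
  set m := r * q / (1 - q)
  have h := ((hasSum_descFactorial_mul_negBinomial hr hq).add
    ((hasSum_mul_negBinomial hr hq).mul_left (1 - 2 * m))).add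
    ((hasSum_negBinomial hr hq).mul_left (m ^ 2))
  rw [show r * (r + 1) * q ^ 2 / (1 - q) ^ 2 + (1 - 2 * m) * m + m ^ 2 * 1 = r * q / (1 - q) ^ 2 by
    simp only [m]; field_simp; ring] at h
  exact h.congr_fun fun n => by ring

theorem abs_sub_mul_le_add_div_sq_mul {w x f m c δ ε M : ℝ} (hw : 0 ≤ w) (hδ : 0 ≤ δ)
    (hε : 0 < ε) (hnear : |x - m| ≤ ε → |f - c| ≤ δ) (hfar : |f - c| ≤ M) :
    |(f - c) * w| ≤ δ * w + M / ε ^ 2 * ((x - m) ^ 2 * w) := by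
  have hM : 0 ≤ M := (abs_nonneg _).trans hfar
  rw [abs_mul, abs_of_nonneg hw]
  by_cases hn : |x - m| ≤ ε
  · have : 0 ≤ M / ε ^ 2 * ((x - m) ^ 2 * w) := by positivity
    linarith [mul_le_mul_of_nonneg_right (hnear hn) hw]
  · have hsq : ε ^ 2 ≤ (x - m) ^ 2 := by
      rw [← sq_abs (x - m)]
      exact pow_le_pow_left₀ hε.le (not_le.1 hn).le 2
    have : M * w ≤ M / ε ^ 2 * ((x - m) ^ 2 * w) := by
      rw [div_mul_eq_mul_div, le_div_iff₀ (by positivity)]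
      linarith [mul_le_mul_of_nonneg_left hsq (mul_nonneg hM hw)]
    linarith [mul_le_mul_of_nonneg_right hfar hw, mul_nonneg hδ hw]

theorem abs_tsum_mul_sub_le {w x f : ℕ → ℝ} {m v c δ ε M : ℝ} (hw₀ : ∀ n, 0 ≤ w n)
    (hw : HasSum w 1) (hv : HasSum (fun n => (x n - m) ^ 2 * w n) v) (hδ : 0 ≤ δ) (hε : 0 < ε)
    (hnear : ∀ n, |x n - m| ≤ ε → |f n - c| ≤ δ) (hfar : ∀ n, |f n - c| ≤ M) :
    |∑' n, f n * w n - c| ≤ δ + M * v / ε ^ 2 := by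
  have hB := (hw.mul_left δ).add (hv.mul_left (M / ε ^ 2))
  rw [mul_one, div_mul_eq_mul_div] at hB
  have hbound n := abs_sub_mul_le_add_div_sq_mul (hw₀ n) hδ hε (hnear n) (hfar n)
  have hs : HasSum (fun n => (f n - c) * w n) _ := (hB.summable.of_norm_bounded hbound).hasSum
  have hdiff : ∑' n, f n * w n - c = ∑' n, (f n - c) * w n := by
    have := (hs.add (hw.mul_left c)).congr_fun fun n => (by ring : f n * w n = _)
    rw [this.tsum_eq, mul_one, add_sub_cancel_right]
  rw [hdiff, abs_le]
  constructor
  · linarith [hasSum_le (fun n => neg_le_of_abs_le (hbound n)) hB.neg hs]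
  · exact hasSum_le (fun n => le_of_abs_le (hbound n)) hs hB

theorem tendsto_sInf_div_of_antitone {B : ℕ → ℕ → ℝ} {p s₀ : ℝ} (hs₀ : 0 ≤ s₀)
    (hB : ∀ᶠ K in atTop, Antitone (B K))
    (hbelow : ∀ᶠ s : ℝ in 𝓝[<] s₀, ∀ᶠ K : ℕ in atTop, p < B K ⌈s * K⌉₊)
    (habove : ∀ᶠ s : ℝ in 𝓝[>] s₀, ∀ᶠ K : ℕ in atTop, B K ⌈s * K⌉₊ ≤ p) :
    Tendsto (fun K : ℕ => (sInf {T | B K T ≤ p} : ℕ) / (K : ℝ)) atTop (𝓝 s₀) := by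
  have hK : ∀ᶠ K : ℕ in atTop, (0 : ℝ) < K :=
    (eventually_gt_atTop 0).mono fun K hK => Nat.cast_pos.2 hK
  have hne : ∀ᶠ K in atTop, {T | B K T ≤ p}.Nonempty := by
    obtain ⟨s, hs⟩ := habove.exists
    exact hs.mono fun K hK => ⟨_, hK⟩
  rw [tendsto_order]
  constructor
  · intro a ha
    obtain ⟨s, hs, has, -⟩ := (hbelow.and (Ioo_mem_nhdsLT ha)).exists
    filter_upwards [hs, hB, hne, hK] with K hp hanti hS hK
    have hlt : ⌈s * K⌉₊ < sInf {T | B K T ≤ p} := by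
      by_contra! hle
      exact (hanti hle).trans (Nat.sInf_mem hS) |>.not_gt hp
    rw [lt_div_iff₀ hK]
    calc a * K < s * K := by gcongr
      _ ≤ ⌈s * K⌉₊ := Nat.le_ceil _
      _ < sInf {T | B K T ≤ p} := by exact_mod_cast hlt
  · intro a ha
    obtain ⟨s, hs, hs₀s, hsa⟩ := (habove.and (Ioo_mem_nhdsGT ha)).exists
    have hinv : ∀ᶠ K : ℕ in atTop, (K : ℝ)⁻¹ < a - s :=
      tendsto_inv_atTop_nhds_zero_nat.eventually_lt_const (by linarith)
    have hs0 : 0 ≤ s := hs₀.trans hs₀s.le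
    filter_upwards [hs, hinv, hK] with K hp hinv hK
    have hone : 1 < (a - s) * K := (inv_lt_iff_one_lt_mul₀ hK).1 hinv
    rw [div_lt_iff₀ hK]
    calc (sInf {T | B K T ≤ p} : ℕ) ≤ (⌈s * K⌉₊ : ℝ) := by exact_mod_cast Nat.sInf_le hp
      _ < s * K + 1 := Nat.ceil_lt_add_one (by positivity)
      _ < a * K := by linarith

theorem Puser_eq_negBinomial {μ : ℝ} (hμ : 0 < μ) (K n : ℕ) :
    Puser μ K n = negBinomial (K * (7 / 2)) (μ / (μ + 7 / 2)) n := by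
  have hb : (0 : ℝ) < μ + 7 / 2 := by linarith
  have h1q : 1 - μ / (μ + 7 / 2) = 7 / 2 / (μ + 7 / 2) := by field_simp; ring
  rw [Puser, negBinomial, negBinomialCoeff, h1q, Real.div_rpow (by norm_num) hb.le,
    Real.rpow_add hb, Real.rpow_natCast, div_pow]
  ring

theorem abs_div_add_lt_one {x b : ℝ} (hx : 0 ≤ x) (hb : 0 < b) : |x / (x + b)| < 1 := by
  rw [abs_of_nonneg (by positivity), div_lt_one (by positivity)]
  linarith

section Puser

variable {μ : ℝ} (hμ : 0 < μ) {K : ℕ} (hK : K ≠ 0)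
include hμ hK

theorem Puser_nonneg (n : ℕ) : 0 ≤ Puser μ K n := by
  have hq := abs_div_add_lt_one hμ.le (by norm_num : (0 : ℝ) < 7 / 2)
  rw [Puser_eq_negBinomial hμ]
  exact negBinomial_nonneg (by positivity) (by positivity) (abs_lt.1 hq).2.le n

theorem hasSum_Puser : HasSum (Puser μ K) 1 := by
  have hq := abs_div_add_lt_one hμ.le (by norm_num : (0 : ℝ) < 7 / 2)
  exact (hasSum_negBinomial (by positivity) hq).congr_fun (Puser_eq_negBinomial hμ K)

theorem hasSum_sq_div_sub_mul_Puser :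
    HasSum (fun n : ℕ => ((n : ℝ) / K - μ) ^ 2 * Puser μ K n)
      (μ * (μ + 7 / 2) / (7 / 2) / K) := by
  have hK' : (K : ℝ) ≠ 0 := Nat.cast_ne_zero.2 hK
  have hb : μ + 7 / 2 ≠ 0 := by positivity
  have h1q : 1 - μ / (μ + 7 / 2) = 7 / 2 / (μ + 7 / 2) := by field_simp; ring
  have hmean : K * (7 / 2) * (μ / (μ + 7 / 2)) / (7 / 2 / (μ + 7 / 2)) = K * μ := by field_simp
  have hvar : 1 / (K : ℝ) ^ 2 * (K * (7 / 2) * (μ / (μ + 7 / 2)) / (7 / 2 / (μ + 7 / 2)) ^ 2) =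
      μ * (μ + 7 / 2) / (7 / 2) / K := by field_simp
  have h := (hasSum_sq_sub_mean_mul_negBinomial (r := K * (7 / 2)) (by positivity)
    (abs_div_add_lt_one hμ.le (by norm_num : (0 : ℝ) < 7 / 2))).mul_left (1 / (K : ℝ) ^ 2)
  rw [h1q, hmean, hvar] at h
  refine h.congr_fun fun n => ?_
  rw [Puser_eq_negBinomial hμ]
  field_simp

end Puser

theorem max_zero_sub_div_le_one {x y : ℝ} (hx : 0 ≤ x) (hy : 0 ≤ y) :
    max 0 ((x - y) / x) ≤ 1 :=
  max_le zero_le_one (div_le_one_of_le₀ (by linarith) hx)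

theorem abs_max_zero_sub_div_sub_le_one {x y c : ℝ} (hx : 0 ≤ x) (hy : 0 ≤ y) (hc₀ : 0 ≤ c)
    (hc₁ : c ≤ 1) : |max 0 ((x - y) / x) - c| ≤ 1 := by
  have := max_zero_sub_div_le_one hx hy
  have := le_max_left 0 ((x - y) / x)
  rw [abs_le]
  constructor <;> linarith

-- The `n = 0` term vanishes on both sides because `x / 0 = 0`.
theorem blockTerm_eq (μ : ℝ) (K T n : ℕ) :
    blockTerm μ K T n = max 0 (((n : ℝ) - T) / n) * Puser μ K n := by
  rw [blockTerm]
  split_ifs with h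
  · have : (T : ℝ) + 1 ≤ n := by exact_mod_cast h
    rw [max_eq_right (div_nonneg (by linarith) n.cast_nonneg)]
  · have : (n : ℝ) ≤ T := by exact_mod_cast Nat.lt_succ_iff.1 (not_le.1 h)
    rw [max_eq_left (div_nonpos_of_nonpos_of_nonneg (by linarith) n.cast_nonneg), zero_mul]

theorem Pblock_antitone {μ : ℝ} (hμ : 0 < μ) {K : ℕ} (hK : K ≠ 0) : Antitone (Pblock μ K) := by
  have hsum : ∀ T, Summable (blockTerm μ K T) := fun T =>
    (hasSum_Puser hμ hK).summable.of_nonneg_of_le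
      (fun n => by rw [blockTerm_eq]; exact mul_nonneg (le_max_left _ _) (Puser_nonneg hμ hK n))
      (fun n => by
        rw [blockTerm_eq]
        exact mul_le_of_le_one_left (Puser_nonneg hμ hK n)
          (max_zero_sub_div_le_one n.cast_nonneg T.cast_nonneg))
  intro T T' hTT
  refine Summable.tsum_le_tsum (fun n => ?_) (hsum T') (hsum T)
  rw [blockTerm_eq, blockTerm_eq]
  have : (T : ℝ) ≤ T' := by exact_mod_cast hTT
  exact mul_le_mul_of_nonneg_right
    (max_le_max le_rfl (div_le_div_of_nonneg_right (by linarith) n.cast_nonneg))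
    (Puser_nonneg hμ hK n)

theorem Pblock_tendsto {μ s : ℝ} (hμ : 0 < μ) (hs : 0 ≤ s) (hsμ : s ≤ μ) :
    Tendsto (fun K : ℕ => Pblock μ K ⌈s * K⌉₊) atTop (𝓝 (1 - s / μ)) := by
  set φ : ℝ × ℝ → ℝ := fun z => max 0 ((z.2 - z.1) / z.2)
  have hφ : ContinuousAt φ (s, μ) :=
    continuousAt_const.max ((continuousAt_snd.sub continuousAt_fst).div continuousAt_snd hμ.ne')
  have hφs : φ (s, μ) = 1 - s / μ := by
    simp only [φ, sub_div, div_self hμ.ne']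
    exact max_eq_right (by rw [sub_nonneg, div_le_one hμ]; exact hsμ)
  have hT : Tendsto (fun K : ℕ => (⌈s * K⌉₊ : ℝ) / K) atTop (𝓝 s) :=
    (tendsto_nat_ceil_mul_div_atTop hs).comp tendsto_natCast_atTop_atTop
  refine Metric.tendsto_nhds.2 fun η hη => ?_
  obtain ⟨ε, hε, hφε⟩ := Metric.continuousAt_iff.1 hφ (η / 2) (half_pos hη)
  set C := μ * (μ + 7 / 2) / (7 / 2)
  have hvar : ∀ᶠ K : ℕ in atTop, C / K < η / 2 * (ε / 2) ^ 2 :=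
    (tendsto_const_div_atTop_nhds_zero_nat C).eventually_lt_const (by positivity)
  filter_upwards [Metric.tendsto_nhds.1 hT ε hε, hvar, eventually_ne_atTop 0] with K hTK hvK hK
  have hK' : (K : ℝ) ≠ 0 := Nat.cast_ne_zero.2 hK
  set T := ⌈s * K⌉₊
  have hs1 : s / μ ≤ 1 := (div_le_one hμ).2 hsμ
  have hnear : ∀ n : ℕ, |(n : ℝ) / K - μ| ≤ ε / 2 →
      |max 0 (((n : ℝ) - T) / n) - (1 - s / μ)| ≤ η / 2 := by
    intro n hn
    have hφn : φ (T / K, n / K) = max 0 (((n : ℝ) - T) / n) := by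
      simp only [φ, ← sub_div, div_div_div_cancel_right₀ hK']
    rw [← hφn, ← hφs, ← Real.dist_eq]
    refine (hφε ?_).le
    rw [Prod.dist_eq, max_lt_iff, Real.dist_eq]
    exact ⟨hTK, by rw [Real.dist_eq]; linarith⟩
  have hfar (n : ℕ) : |max 0 (((n : ℝ) - T) / n) - (1 - s / μ)| ≤ 1 :=
    abs_max_zero_sub_div_sub_le_one n.cast_nonneg T.cast_nonneg (by linarith) (by
      have : 0 ≤ s / μ := by positivity
      linarith)
  have key := abs_tsum_mul_sub_le (Puser_nonneg hμ hK) (hasSum_Puser hμ hK)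
    (hasSum_sq_div_sub_mul_Puser hμ hK) (half_pos hη).le (half_pos hε) hnear hfar
  have hsmall : C / K / (ε / 2) ^ 2 < η / 2 := (div_lt_iff₀ (by positivity)).2 hvK
  rw [Real.dist_eq, Pblock]
  simp only [blockTerm_eq]
  calc _ ≤ η / 2 + 1 * (C / K) / (ε / 2) ^ 2 := key
    _ < η := by rw [one_mul]; linarith

/-- eq. (18): for `0 < p < 1`,
`lim_{K→∞} T_K(p)/K = (1 − p)·μ`. -/
theorem minCapacity_limit (μ : ℝ) (hμ : 0 < μ) (p : ℝ) (hp0 : 0 < p) (hp1 : p < 1) :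
    Filter.Tendsto (fun K : ℕ => (minCapacity μ K p : ℝ) / (K : ℝ))
      Filter.atTop (nhds ((1 - p) * μ)) := by
  have hs₀ : 0 < (1 - p) * μ := mul_pos (by linarith) hμ
  have hs₀μ : (1 - p) * μ < μ := by nlinarith
  refine tendsto_sInf_div_of_antitone hs₀.le
    ((eventually_ne_atTop 0).mono fun K hK => Pblock_antitone hμ hK) ?_ ?_
  · filter_upwards [Ioo_mem_nhdsLT hs₀] with s ⟨hs, hsp⟩
    refine (Pblock_tendsto hμ hs.le (by linarith)).eventually_const_lt ?_
    have := (div_lt_iff₀ hμ).2 hsp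
    linarith
  · filter_upwards [Ioo_mem_nhdsGT hs₀μ] with s ⟨hsp, hsμ⟩
    refine ((Pblock_tendsto hμ (by linarith) hsμ.le).eventually_lt_const ?_).mono
      fun K => le_of_lt
    have := (lt_div_iff₀ hμ).2 hsp
    linarith
end
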